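/- Let N ∈ ℕ and let y₁,…,y_N be distinct points in ℝ³. If Θ is a symmetric N×N complex matrix such that ∑_{j,k=1}^N Θ_{jk} / (|x − y_j| · |y − y_k|) = 0 for all x, y ∈ ℝ³ \ {y₁,…,y_N}, then Θ = 0. -/

import Mathlib

/-!
The functions `x ↦ 1 / ‖x - y j‖` are linearly independent on the complement of the distinct
points `y j`: multiplied by `‖x - y i‖`, a vanishing combination `∑ c j / ‖x - y j‖` tends to
`c i` as `x → y i`. Applied first in `x` (for fixed `z`) and then in `z`, this kills every
entry of `Θ`.
-/

open Filter Topology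

section

variable {E 𝕜 ι : Type*} [NormedAddCommGroup E] [NormedSpace ℝ E] [Nontrivial E] [RCLike 𝕜]
  [Fintype ι]

theorem eq_zero_of_forall_sum_div_norm_sub_eq_zero {y : ι → E} (hy : Function.Injective y)
    (c : ι → 𝕜) (h : ∀ x, (∀ j, x ≠ y j) → ∑ j, c j / (‖x - y j‖ : 𝕜) = 0) (i : ι) :
    c i = 0 := by
  classical
  have hoff : ∀ᶠ x in 𝓝[≠] y i, ∀ j, x ≠ y j := by
    refine eventually_all.2 fun j => ?_
    by_cases hj : j = i
    · exact hj ▸ self_mem_nhdsWithin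
    · exact nhdsWithin_le_nhds (eventually_ne_nhds (hy.ne (Ne.symm hj)))
  have hlim : Tendsto (fun x => (‖x - y i‖ : 𝕜) * ∑ j, c j / (‖x - y j‖ : 𝕜)) (𝓝[≠] y i)
      (𝓝 (c i)) := by
    simp only [Finset.mul_sum]
    rw [← Fintype.sum_ite_eq' i c]
    refine tendsto_finsetSum _ fun j _ => ?_
    split_ifs with hj
    · subst hj
      refine tendsto_const_nhds.congr' ?_
      filter_upwards [self_mem_nhdsWithin] with x hx
      have : (‖x - y j‖ : 𝕜) ≠ 0 := by simpa [sub_eq_zero] using hx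
      field_simp
    · have hcont : ContinuousAt (fun x => (‖x - y i‖ : 𝕜) * (c j / (‖x - y j‖ : 𝕜))) (y i) := by
        have : (‖y i - y j‖ : 𝕜) ≠ 0 := by simpa [sub_eq_zero] using hy.ne (Ne.symm hj)
        fun_prop (disch := exact this)
      simpa using hcont.tendsto.mono_left nhdsWithin_le_nhds
  exact tendsto_nhds_unique hlim
    (tendsto_const_nhds.congr' (hoff.mono fun x hx => by simp [h x hx]))

end

theorem stmt_1_general (N : ℕ) (y : Fin N → EuclideanSpace ℝ (Fin 3)) (hy : Function.Injective y)
    (Θ : Matrix (Fin N) (Fin N) ℂ)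
    (h : ∀ x z : EuclideanSpace ℝ (Fin 3), (∀ j, x ≠ y j) → (∀ k, z ≠ y k) →
      ∑ j, ∑ k, Θ j k / (((‖x - y j‖ : ℝ) : ℂ) * ((‖z - y k‖ : ℝ) : ℂ)) = 0) :
    Θ = 0 := by
  have hrow : ∀ z, (∀ k, z ≠ y k) → ∀ j, ∑ k, Θ j k / ((‖z - y k‖ : ℝ) : ℂ) = 0 := fun z hz =>
    eq_zero_of_forall_sum_div_norm_sub_eq_zero hy _ fun x hx =>
      (by simpa only [Finset.sum_div, div_div, mul_comm] using h x z hx hz :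
        ∑ j, (∑ k, Θ j k / ((‖z - y k‖ : ℝ) : ℂ)) / ((‖x - y j‖ : ℝ) : ℂ) = 0)
  ext j k
  exact eq_zero_of_forall_sum_div_norm_sub_eq_zero hy (Θ j) (fun z hz => hrow z hz j) k

theorem stmt_1 (N : ℕ) (y : Fin N → EuclideanSpace ℝ (Fin 3)) (hy : Function.Injective y)
    (Θ : Matrix (Fin N) (Fin N) ℂ) (hsym : Θ.IsSymm)
    (h : ∀ x z : EuclideanSpace ℝ (Fin 3), (∀ j, x ≠ y j) → (∀ k, z ≠ y k) →
      ∑ j, ∑ k, Θ j k / (((‖x - y j‖ : ℝ) : ℂ) * ((‖z - y k‖ : ℝ) : ℂ)) = 0) :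
    Θ = 0 :=
  stmt_1_general N y hy Θ h
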